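/- arXiv:1303.1265 — 2 statements merged into one kernel-verified Lean document; each statement's English description precedes it below -/
import Mathlib

section
/- Let Ψ : ℝ^N → ℝ be a homogeneous harmonic polynomial with Ψ(0) = 0 that is nonnegative and not identically zero on the upper half-space {x : x_N > 0}. Then Ψ is linear: there exists a constant C > 0 such that Ψ(x) = C·x_N for all x. -/
noncomputable def laplacian {N : ℕ} (f : EuclideanSpace ℝ (Fin N) → ℝ)
    (x : EuclideanSpace ℝ (Fin N)) : ℝ :=
  ∑ i : Fin N,
    fderiv ℝ (fun y => fderiv ℝ f y (EuclideanSpace.single i 1)) x (EuclideanSpace.single i 1)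

/-!
Integrate against the standard Gaussian `∏ i, exp (-x_i ^ 2 / 2)`. Integration by parts in
`x_i` gives `∫ x_i p = ∫ ∂_i p` for every polynomial `p`, so by Euler's identity a homogeneous
harmonic polynomial `Ψ` of degree `d ≥ 1` satisfies `d ∫ Ψ = ∫ ΔΨ = 0`, and so does `∂_N Ψ` when
`d ≥ 2`, whence `∫ x_N Ψ = ∫ ∂_N Ψ = 0`. By continuity `Ψ ≥ 0` on the closed half-space, and
`Ψ(-x) = (-1)^d Ψ(x)`. If `d ≥ 2` is even, `Ψ ≥ 0` everywhere; if it is odd, `x_N Ψ ≥ 0`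
everywhere. Either way a nonnegative continuous function with vanishing Gaussian integral
vanishes, contradicting nontriviality. Hence `d = 1`, and a linear form that is nonnegative on
the half-space is a positive multiple of `x_N`.
-/

open MeasureTheory Finset MvPolynomial

noncomputable def gaussian (t : ℝ) : ℝ := Real.exp (-(1 / 2) * t ^ 2)

lemma gaussian_pos (t : ℝ) : 0 < gaussian t := Real.exp_pos _

lemma continuous_gaussian : Continuous gaussian := by
  unfold gaussian; fun_prop

lemma hasDerivAt_gaussian (t : ℝ) : HasDerivAt gaussian (-t * gaussian t) t := by
  convert ((hasDerivAt_pow 2 t).const_mul (-(1 / 2) : ℝ)).exp using 1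
  · rfl
  · unfold gaussian; push_cast; ring

lemma integrable_pow_mul_gaussian (n : ℕ) : Integrable fun t : ℝ => t ^ n * gaussian t := by
  simpa [gaussian, Real.rpow_natCast] using
    integrable_rpow_mul_exp_neg_mul_sq (b := 1 / 2) (by norm_num) (s := n)
      (by linarith [(Nat.cast_nonneg n : (0 : ℝ) ≤ n)])

noncomputable def gaussianMoment (n : ℕ) : ℝ := ∫ t : ℝ, t ^ n * gaussian t

lemma gaussianMoment_succ (k : ℕ) : gaussianMoment (k + 1) = k * gaussianMoment (k - 1) := by
  have h := integral_mul_deriv_eq_deriv_mul_of_integrable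
    (fun t _ => hasDerivAt_pow k t) (fun t _ => hasDerivAt_gaussian t)
    (by simpa only [Pi.mul_def, pow_succ, mul_assoc, neg_mul, mul_neg] using
      (integrable_pow_mul_gaussian (k + 1)).fun_neg)
    (by simpa only [Pi.mul_def, mul_assoc] using (integrable_pow_mul_gaussian (k - 1)).const_mul k)
    (integrable_pow_mul_gaussian k)
  simp only [neg_mul, mul_neg, integral_neg, neg_inj] at h
  simp only [gaussianMoment, pow_succ, mul_assoc, h, ← integral_const_mul]

namespace MvPolynomial

variable {R σ : Type*}

theorem pderiv_pderiv_comm [CommRing R] (i j : σ) (p : MvPolynomial σ R) :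
    pderiv i (pderiv j p) = pderiv j (pderiv i p) := by
  have h : ⁅pderiv i, pderiv j⁆ = (0 : Derivation R (MvPolynomial σ R) (MvPolynomial σ R)) :=
    derivation_ext fun k => by
      classical rw [Derivation.commutator_apply]; simp [Pi.single_apply, apply_ite]
  have hp := congr($h p)
  rwa [Derivation.commutator_apply, Derivation.zero_apply, sub_eq_zero] at hp

noncomputable def laplacian [CommRing R] [Fintype σ] (p : MvPolynomial σ R) : MvPolynomial σ R :=
  ∑ i, pderiv i (pderiv i p)

theorem laplacian_pderiv [CommRing R] [Fintype σ] (i : σ) (p : MvPolynomial σ R) :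
    (pderiv i p).laplacian = pderiv i p.laplacian := by
  simp only [laplacian, map_sum, pderiv_pderiv_comm i]

theorem IsHomogeneous.eval_smul [CommSemiring R] {φ : MvPolynomial σ R} {n : ℕ}
    (h : φ.IsHomogeneous n) (t : R) (x : σ → R) : eval (t • x) φ = t ^ n * eval x φ := by
  classical
  conv_lhs => rw [φ.as_sum]
  conv_rhs => rw [φ.as_sum]
  simp only [map_sum, mul_sum, eval_monomial, Finsupp.prod, Pi.smul_apply, smul_eq_mul, mul_pow,
    prod_mul_distrib, prod_pow_eq_pow_sum]
  refine sum_congr rfl fun α hα => ?_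
  rw [← h (mem_support_iff.mp hα), Finsupp.weight_apply, Finsupp.sum]
  simp only [Pi.one_apply, smul_eq_mul, mul_one]
  ring

theorem eval_smul_eq_sum_homogeneousComponent [CommSemiring R] (φ : MvPolynomial σ R) (t : R)
    (x : σ → R) : eval (t • x) φ =
      ∑ k ∈ range (φ.totalDegree + 1), eval x (homogeneousComponent k φ) * t ^ k := by
  conv_lhs => rw [← sum_homogeneousComponent φ]
  simp only [map_sum, (homogeneousComponent_isHomogeneous _ φ).eval_smul, mul_comm]

theorem isHomogeneous_of_eval_smul {φ : MvPolynomial σ ℝ} {n : ℕ}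
    (h : ∀ t : ℝ, 0 < t → ∀ x, eval (t • x) φ = t ^ n * eval x φ) : φ.IsHomogeneous n := by
  suffices hcomp : ∀ k ≠ n, homogeneousComponent k φ = 0 by
    intro α hα
    by_contra hk
    apply hα
    simpa [coeff_homogeneousComponent, Finsupp.degree_eq_weight_one, ← Pi.one_def] using
      congr(coeff α $(hcomp _ hk))
  intro k hk
  rcases lt_or_ge φ.totalDegree k with hkD | hkD
  · exact homogeneousComponent_eq_zero _ _ hkD
  refine MvPolynomial.funext fun x => ?_
  -- `f t = φ (t • x) - t ^ n * φ x`, which vanishes for all `t > 0`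
  let f : Polynomial ℝ := ∑ j ∈ range (φ.totalDegree + 1),
    Polynomial.C (eval x (homogeneousComponent j φ)) * Polynomial.X ^ j -
      Polynomial.C (eval x φ) * Polynomial.X ^ n
  have hf : f = 0 := by
    refine Polynomial.eq_zero_of_infinite_isRoot f ((Set.Ioi_infinite 0).mono fun t ht => ?_)
    have hφ := eval_smul_eq_sum_homogeneousComponent φ t x
    rw [h t ht] at hφ
    simp only [f, Polynomial.IsRoot, Polynomial.eval_sub, Polynomial.eval_finsetSum,
      Polynomial.eval_mul, Polynomial.eval_C, Polynomial.eval_pow, Polynomial.eval_X]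
    rw [Set.mem_ofPred_eq, ← hφ, mul_comm, sub_self]
  simpa [f, Polynomial.finsetSum_coeff, Polynomial.coeff_X_pow, hk, Nat.lt_succ_iff.mpr hkD]
    using congr(Polynomial.coeff $hf k)

theorem IsHomogeneous.eval_eq_sum_coeff_mul [CommSemiring R] [Fintype σ] {φ : MvPolynomial σ R}
    (h : φ.IsHomogeneous 1) (x : σ → R) :
    eval x φ = ∑ i, coeff (Finsupp.single i 1) φ * x i := by
  have hconst (i : σ) : pderiv i φ = C (coeff (Finsupp.single i 1) φ) := by
    have h0 := h.pderiv (i := i)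
    rw [← totalDegree_zero_iff_isHomogeneous, totalDegree_eq_zero_iff_eq_C] at h0
    rw [h0, coeff_pderiv]
    simp
  simpa [hconst, mul_comm] using congr(eval x $h.sum_X_mul_pderiv).symm

end MvPolynomial

section GaussianFunctional

variable {σ : Type*} [Fintype σ]

variable (σ) in
/-- The functional `p ↦ ∫ p(x) ∏ i, gaussian (x i) dx`, defined through its values on monomials
so that its algebraic properties need no integrability (see `integral_eval_mul_gaussian`). -/
noncomputable def gaussianFunctional : MvPolynomial σ ℝ →ₗ[ℝ] ℝ :=
  (basisMonomials σ ℝ).constr ℝ fun α => ∏ i, gaussianMoment (α i)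

lemma gaussianFunctional_monomial (α : σ →₀ ℕ) (c : ℝ) :
    gaussianFunctional σ (monomial α c) = c * ∏ i, gaussianMoment (α i) := by
  have h : monomial α c = c • basisMonomials σ ℝ α := by
    rw [coe_basisMonomials, smul_monomial, smul_eq_mul, mul_one]
  rw [h, map_smul, gaussianFunctional, Module.Basis.constr_basis, smul_eq_mul]

lemma gaussianFunctional_X_mul (i : σ) (p : MvPolynomial σ ℝ) :
    gaussianFunctional σ (X i * p) = gaussianFunctional σ (pderiv i p) := by
  classical
  induction p using MvPolynomial.induction_on' with
  | monomial α c =>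
    have hrest : ∏ j ∈ {i}ᶜ, gaussianMoment ((Finsupp.single i 1 + α : σ →₀ ℕ) j) =
        ∏ j ∈ {i}ᶜ, gaussianMoment ((α - Finsupp.single i 1 : σ →₀ ℕ) j) :=
      prod_congr rfl fun j hj => by simp [Finsupp.single_eq_of_ne (by simpa using hj)]
    rw [X, monomial_mul, one_mul, pderiv_monomial, gaussianFunctional_monomial,
      gaussianFunctional_monomial, Fintype.prod_eq_mul_prod_compl i,
      Fintype.prod_eq_mul_prod_compl i, hrest, Finsupp.add_apply, Finsupp.tsub_apply,
      Finsupp.single_eq_same, add_comm 1, gaussianMoment_succ]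
    ring
  | add p q hp hq => rw [mul_add, map_add, hp, hq, map_add, map_add]

lemma gaussianFunctional_eq_zero_of_isHomogeneous {Q : MvPolynomial σ ℝ} {n : ℕ}
    (hQ : Q.IsHomogeneous n) (hn : n ≠ 0) (hΔ : Q.laplacian = 0) : gaussianFunctional σ Q = 0 := by
  have h : n • gaussianFunctional σ Q = 0 := by
    rw [← map_nsmul, ← hQ.sum_X_mul_pderiv, map_sum]
    simp only [gaussianFunctional_X_mul]
    rw [← map_sum, ← MvPolynomial.laplacian, hΔ, map_zero]
  exact (smul_eq_zero.mp h).resolve_left hn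

lemma gaussianFunctional_X_mul_eq_zero {Q : MvPolynomial σ ℝ} {n : ℕ}
    (hQ : Q.IsHomogeneous n) (hn : 2 ≤ n) (hΔ : Q.laplacian = 0) (i : σ) :
    gaussianFunctional σ (X i * Q) = 0 := by
  rw [gaussianFunctional_X_mul]
  exact gaussianFunctional_eq_zero_of_isHomogeneous hQ.pderiv (by omega)
    (by rw [laplacian_pderiv, hΔ, map_zero])

lemma eval_monomial_mul_gaussian (α : σ →₀ ℕ) (c : ℝ) (x : σ → ℝ) :
    eval x (monomial α c) * ∏ i, gaussian (x i) = c * ∏ i, (x i ^ α i * gaussian (x i)) := by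
  rw [eval_monomial, Finsupp.prod_fintype _ _ fun i => pow_zero _, prod_mul_distrib, mul_assoc]

lemma integrable_eval_mul_gaussian (P : MvPolynomial σ ℝ) :
    Integrable fun x : σ → ℝ => eval x P * ∏ i, gaussian (x i) := by
  induction P using MvPolynomial.induction_on' with
  | monomial α c =>
    simp only [eval_monomial_mul_gaussian]
    exact (Integrable.fintype_prod fun i => integrable_pow_mul_gaussian (α i)).const_mul c
  | add p q hp hq => simpa only [map_add, add_mul] using hp.fun_add hq

lemma integral_eval_mul_gaussian (P : MvPolynomial σ ℝ) :
    ∫ x : σ → ℝ, eval x P * ∏ i, gaussian (x i) = gaussianFunctional σ P := by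
  induction P using MvPolynomial.induction_on' with
  | monomial α c =>
    simp only [eval_monomial_mul_gaussian, integral_const_mul, gaussianFunctional_monomial,
      integral_fintype_prod_volume_eq_prod fun i t => t ^ α i * gaussian t]
    rfl
  | add p q hp hq =>
    simp only [map_add, add_mul, integral_add (integrable_eval_mul_gaussian p)
      (integrable_eval_mul_gaussian q), hp, hq]

lemma eval_eq_zero_of_nonneg_of_gaussianFunctional_eq_zero {P : MvPolynomial σ ℝ}
    (hP : ∀ x, 0 ≤ eval x P) (hT : gaussianFunctional σ P = 0) (x : σ → ℝ) : eval x P = 0 := by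
  have hW (x : σ → ℝ) : 0 < ∏ i, gaussian (x i) := prod_pos fun i _ => gaussian_pos _
  have hcont : Continuous fun x : σ → ℝ => eval x P * ∏ i, gaussian (x i) :=
    (continuous_eval P).mul
      (continuous_finsetProd _ fun i _ => continuous_gaussian.comp (continuous_apply i))
  have hae := (integral_eq_zero_iff_of_nonneg (fun x => mul_nonneg (hP x) (hW x).le)
    (integrable_eval_mul_gaussian P)).mp (by rw [integral_eval_mul_gaussian, hT])
  have hx := congrFun ((hcont.ae_eq_iff_eq volume continuous_const).mp hae) x
  exact (mul_eq_zero.mp hx).resolve_right (hW x).ne'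

end GaussianFunctional

section Euclidean

variable {ι : Type*} [Fintype ι]

lemma hasFDerivAt_eval (P : MvPolynomial ι ℝ) (x : EuclideanSpace ℝ ι) :
    HasFDerivAt (fun y : EuclideanSpace ℝ ι => eval y.ofLp P)
      (∑ i, eval x.ofLp (pderiv i P) • EuclideanSpace.proj (𝕜 := ℝ) i) x := by
  classical
  induction P using MvPolynomial.induction_on with
  | C a => simpa using hasFDerivAt_const a x
  | add p q hp hq =>
    simp only [map_add]
    exact (hp.fun_add hq).congr_fderiv (by simp [sum_add_distrib, add_smul])
  | mul_X p j hp =>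
    simp only [eval_mul, eval_X]
    refine (hp.fun_mul (EuclideanSpace.proj (𝕜 := ℝ) j).hasFDerivAt).congr_fderiv ?_
    ext v
    simp [Pi.single_apply, sum_add_distrib, add_mul, mul_sum, apply_ite, ite_mul, mul_assoc]

lemma fderiv_eval_single [DecidableEq ι] (P : MvPolynomial ι ℝ) (x : EuclideanSpace ℝ ι) (i : ι) :
    fderiv ℝ (fun y : EuclideanSpace ℝ ι => eval y.ofLp P) x (EuclideanSpace.single i 1) =
      eval x.ofLp (pderiv i P) := by
  simp [(hasFDerivAt_eval P x).fderiv, PiLp.single_apply]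

end Euclidean

lemma laplacian_eval {N : ℕ} (P : MvPolynomial (Fin N) ℝ) (x : EuclideanSpace ℝ (Fin N)) :
    laplacian (fun y => eval y.ofLp P) x = eval x.ofLp P.laplacian := by
  simp only [_root_.laplacian, fderiv_eval_single, MvPolynomial.laplacian, map_sum]

lemma laplacian_eq_zero_of_harmonic {N : ℕ} {P : MvPolynomial (Fin N) ℝ}
    (h : ∀ x, laplacian (fun y => eval y.ofLp P) x = 0) : P.laplacian = 0 :=
  MvPolynomial.funext fun x => by simpa [laplacian_eval] using h (WithLp.toLp 2 x)

section HalfSpace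

variable {σ : Type*}

lemma Continuous.nonneg_of_forall_pos_apply {f : (σ → ℝ) → ℝ} (hf : Continuous f) {i : σ}
    (h : ∀ x, 0 < x i → 0 ≤ f x) (x : σ → ℝ) (hx : 0 ≤ x i) : 0 ≤ f x := by
  classical
  have hg : Continuous fun t : ℝ => f (x + t • Pi.single i 1) := hf.comp (by fun_prop)
  have hlim := hg.tendsto 0
  simp only [zero_smul, add_zero] at hlim
  refine ge_of_tendsto (hlim.mono_left nhdsWithin_le_nhds)
    (eventually_nhdsWithin_of_forall (s := Set.Ioi 0) fun t ht => h _ ?_)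
  simpa using add_pos_of_nonneg_of_pos hx ht

variable [Fintype σ]

lemma sum_mul_eq_mul_of_nonneg {a : σ → ℝ} {i : σ} (h : ∀ x : σ → ℝ, 0 < x i → 0 ≤ ∑ j, a j * x j)
    (x : σ → ℝ) : ∑ j, a j * x j = a i * x i := by
  classical
  refine sum_eq_single i (fun j _ hji => ?_) (by simp)
  suffices a j = 0 by rw [this, zero_mul]
  by_contra hj
  -- along `e_i + s e_j` the form equals `a i + s * a j`, which takes the value `-1`
  have := h (Pi.single i 1 + (-(a i + 1) / a j) • Pi.single j 1) (by simp [hji.symm])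
  simp only [Pi.add_apply, Pi.smul_apply, Pi.single_apply, smul_eq_mul, mul_add, mul_ite,
    mul_one, mul_zero, sum_add_distrib, sum_ite_eq', mem_univ, if_true] at this
  field_simp at this
  linarith

theorem degree_eq_one_of_harmonic_of_nonneg {P : MvPolynomial σ ℝ} {n : ℕ}
    (hP : P.IsHomogeneous n) (hn : n ≠ 0) (hΔ : P.laplacian = 0) {i : σ}
    (hnonneg : ∀ x, 0 < x i → 0 ≤ eval x P) (hne : ∃ x, 0 < x i ∧ eval x P ≠ 0) : n = 1 := by
  by_contra hn1
  obtain ⟨x₀, hx₀, hP₀⟩ := hne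
  have hclosed := (continuous_eval P).nonneg_of_forall_pos_apply hnonneg
  have hneg (x : σ → ℝ) : eval (-x) P = (-1) ^ n * eval x P := by
    simpa using hP.eval_smul (-1) x
  rcases n.even_or_odd with heven | hodd
  · have hP_nonneg (x : σ → ℝ) : 0 ≤ eval x P := by
      rcases le_total 0 (x i) with hx | hx
      · exact hclosed x hx
      · simpa [hneg, heven.neg_one_pow] using hclosed (-x) (by simpa)
    exact hP₀ (eval_eq_zero_of_nonneg_of_gaussianFunctional_eq_zero hP_nonneg
      (gaussianFunctional_eq_zero_of_isHomogeneous hP hn hΔ) x₀)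
  · have hXP_nonneg (x : σ → ℝ) : 0 ≤ eval x (X i * P) := by
      rcases le_total 0 (x i) with hx | hx
      · simpa using mul_nonneg hx (hclosed x hx)
      · have := hclosed (-x) (by simpa)
        rw [hneg, hodd.neg_one_pow] at this
        simpa using mul_nonneg_of_nonpos_of_nonpos hx (by linarith)
    have h := eval_eq_zero_of_nonneg_of_gaussianFunctional_eq_zero hXP_nonneg
      (gaussianFunctional_X_mul_eq_zero hP (by omega) hΔ i) x₀
    exact hP₀ (by simpa [hx₀.ne'] using h)

theorem exists_eq_mul_of_isHomogeneous_one {P : MvPolynomial σ ℝ} (hP : P.IsHomogeneous 1)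
    {i : σ} (hnonneg : ∀ x, 0 < x i → 0 ≤ eval x P) (hne : ∃ x, 0 < x i ∧ eval x P ≠ 0) :
    ∃ C, 0 < C ∧ ∀ x, eval x P = C * x i := by
  simp only [hP.eval_eq_sum_coeff_mul] at hnonneg hne ⊢
  have hlin := sum_mul_eq_mul_of_nonneg hnonneg
  simp only [hlin] at hnonneg hne
  obtain ⟨x₀, hx₀, hne⟩ := hne
  refine ⟨_, lt_of_le_of_ne ?_ (left_ne_zero_of_mul hne).symm, hlin⟩
  simpa using hnonneg 1 one_pos

end HalfSpace

theorem stmt_0_general (N : ℕ) (iN : Fin N)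
    (Ψ : EuclideanSpace ℝ (Fin N) → ℝ)
    (P : MvPolynomial (Fin N) ℝ) (hP : ∀ x, Ψ x = MvPolynomial.eval (fun i => x i) P)
    (d : ℕ) (hd : 1 ≤ d)
    (hhom : ∀ (t : ℝ), 0 < t → ∀ x, Ψ (t • x) = t ^ d * Ψ x)
    (hharm : ∀ x, laplacian Ψ x = 0)
    (hnonneg : ∀ x : EuclideanSpace ℝ (Fin N), 0 < x iN → 0 ≤ Ψ x)
    (hnontriv : ¬ (∀ x : EuclideanSpace ℝ (Fin N), 0 < x iN → Ψ x = 0)) :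
    ∃ C : ℝ, 0 < C ∧ ∀ x : EuclideanSpace ℝ (Fin N), Ψ x = C * x iN := by
  obtain rfl : Ψ = fun x => eval x.ofLp P := funext hP
  have hPhom : P.IsHomogeneous d :=
    isHomogeneous_of_eval_smul fun t ht y => by simpa using hhom t ht (WithLp.toLp 2 y)
  have hnonneg' (y : Fin N → ℝ) (hy : 0 < y iN) : 0 ≤ eval y P := hnonneg (WithLp.toLp 2 y) hy
  have hne : ∃ y : Fin N → ℝ, 0 < y iN ∧ eval y P ≠ 0 := by
    obtain ⟨x, hx, hx0⟩ := not_forall₂.mp hnontriv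
    exact ⟨x.ofLp, hx, hx0⟩
  obtain rfl := degree_eq_one_of_harmonic_of_nonneg hPhom (by omega)
    (laplacian_eq_zero_of_harmonic hharm) hnonneg' hne
  obtain ⟨C, hC, hCP⟩ := exists_eq_mul_of_isHomogeneous_one hPhom hnonneg' hne
  exact ⟨C, hC, fun x => hCP x.ofLp⟩

/-- A homogeneous harmonic polynomial, vanishing at the origin, nonnegative and not
identically zero on the upper half-space, is linear: `Ψ x = C * x_N` with `C > 0`. -/
theorem stmt_0 (N : ℕ) (hN : 2 ≤ N) (iN : Fin N) (hiN : (iN : ℕ) = N - 1)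
    (Ψ : EuclideanSpace ℝ (Fin N) → ℝ)
    (P : MvPolynomial (Fin N) ℝ) (hP : ∀ x, Ψ x = MvPolynomial.eval (fun i => x i) P)
    (d : ℕ) (hd : 1 ≤ d)
    (hhom : ∀ (t : ℝ), 0 < t → ∀ x, Ψ (t • x) = t ^ d * Ψ x)
    (hharm : ∀ x, laplacian Ψ x = 0)
    (h0 : Ψ 0 = 0)
    (hnonneg : ∀ x : EuclideanSpace ℝ (Fin N), 0 < x iN → 0 ≤ Ψ x)
    (hnontriv : ¬ (∀ x : EuclideanSpace ℝ (Fin N), 0 < x iN → Ψ x = 0)) :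
    ∃ C : ℝ, 0 < C ∧ ∀ x : EuclideanSpace ℝ (Fin N), Ψ x = C * x iN :=
  stmt_0_general N iN Ψ P hP d hd hhom hharm hnonneg hnontriv
end

section
/- Let D ⊂ ℝ^N be an open connected set whose closure is disjoint from the closure of some infinite open connected cone, let c ∈ L^∞_loc(D) with c ≤ 0 a.e., and let w ∈ C⁰(cl D) ∩ W^{2,N}_loc(D) satisfy Δw + c(x)·w ≥ 0 in D, w ≤ 0 on ∂D, and sup_D w⁺ < ∞. Then w ≤ 0 in D. -/
/-!
Let `M = sup_D w⁺`. Scaling the cone about its vertex `z` gives a `q > 0` such that every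
`x ∈ D` lies within `2‖x - z‖` of a point `z'` whose ball of radius `ρ = q‖x - z‖` misses
`closure D`. Where `w > 0` we have `Δw ≥ -c w ≥ 0` almost everywhere, hence everywhere by
continuity of `Δw`, so on `{w > 0} ∩ B(z', 4‖x - z‖)` the function
`w + K (ρ / ‖y - z'‖) ^ (2N)` is strictly subharmonic, and the classical maximum principle on this
bounded set gives `w x ≤ κ M` with `κ < 1` depending only on `q` and `N`.
Hence `M ≤ κ M`, i.e. `M = 0`.
-/

open MeasureTheory

open Filter Topology Metric

theorem IsLocalMax.deriv_deriv_nonpos {f : ℝ → ℝ} {a : ℝ} (h : IsLocalMax f a)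
    (hf : ContinuousAt f a) : deriv (deriv f) a ≤ 0 := by
  by_contra! hpos
  have hmin : IsLocalMin f a := isLocalMin_of_deriv_deriv_pos hpos h.deriv_eq_zero hf
  have hconst : f =ᶠ[𝓝 a] fun _ => f a :=
    (h.and hmin).mono fun _ hx => le_antisymm hx.1 hx.2
  have hderiv : deriv f =ᶠ[𝓝 a] fun _ => 0 :=
    hconst.eventuallyEq_nhds.mono fun _ hy => by rw [hy.deriv_eq, deriv_const]
  rw [hderiv.deriv_eq, deriv_const] at hpos
  exact lt_irrefl _ hpos

theorem deriv_deriv_comp_add_smul {E : Type*} [NormedAddCommGroup E] [NormedSpace ℝ E]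
    {f : E → ℝ} {x : E} (hf : ContDiffAt ℝ 2 f x) (e : E) :
    deriv (deriv fun t : ℝ => f (x + t • e)) 0 = fderiv ℝ (fun y => fderiv ℝ f y e) x e := by
  have hline : ∀ t : ℝ, HasDerivAt (fun t : ℝ => x + t • e) e t := fun t => by
    simpa using ((hasDerivAt_id t).smul_const e).const_add x
  have hcont : ContinuousAt (fun t : ℝ => x + t • e) 0 := (hline 0).continuousAt
  have hdiff : ∀ᶠ t in 𝓝 (0 : ℝ), DifferentiableAt ℝ f (x + t • e) := by
    apply hcont.eventually
    simpa using (hf.eventually (by norm_num)).mono fun y hy => hy.differentiableAt two_ne_zero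
  have hderiv : deriv (fun t : ℝ => f (x + t • e)) =ᶠ[𝓝 0] fun t => fderiv ℝ f (x + t • e) e :=
    hdiff.mono fun t ht => (ht.hasFDerivAt.comp_hasDerivAt t (hline t)).deriv
  have hF : DifferentiableAt ℝ (fun y => fderiv ℝ f y e) x :=
    ((hf.fderiv_right (m := 1) le_rfl).differentiableAt one_ne_zero).clm_apply
      (differentiableAt_const e)
  rw [hderiv.deriv_eq]
  exact (hF.hasFDerivAt.comp_hasDerivAt_of_eq (0 : ℝ) (hline 0) (by simp)).deriv

theorem laplacian_nonpos_of_isLocalMax {N : ℕ} {f : EuclideanSpace ℝ (Fin N) → ℝ}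
    {x : EuclideanSpace ℝ (Fin N)} (hf : ContDiffAt ℝ 2 f x) (hmax : IsLocalMax f x) :
    laplacian f x ≤ 0 := by
  refine Finset.sum_nonpos fun i _ => ?_
  set e : EuclideanSpace ℝ (Fin N) := EuclideanSpace.single i 1
  have hline : ContinuousAt (fun t : ℝ => x + t • e) 0 := by fun_prop
  rw [← deriv_deriv_comp_add_smul hf e]
  refine IsLocalMax.deriv_deriv_nonpos ?_ ?_
  · exact IsLocalMax.comp_continuous (by simpa using hmax) hline
  · exact hf.continuousAt.comp_of_eq hline (by simp)

theorem laplacian_eq_laplacian {N : ℕ} {f : EuclideanSpace ℝ (Fin N) → ℝ}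
    {x : EuclideanSpace ℝ (Fin N)} (hf : ContDiffAt ℝ 2 f x) :
    laplacian f x = Laplacian.laplacian f x := by
  rw [InnerProductSpace.laplacian_eq_iteratedFDeriv_orthonormalBasis f
    (EuclideanSpace.basisFun (Fin N) ℝ)]
  refine Finset.sum_congr rfl fun i _ => ?_
  have hF : DifferentiableAt ℝ (fderiv ℝ f) x :=
    (hf.fderiv_right (m := 1) le_rfl).differentiableAt one_ne_zero
  rw [iteratedFDeriv_two_apply, fderiv_clm_apply hF (differentiableAt_const _)]
  simp

theorem laplacian_add_smul {N : ℕ} {f g : EuclideanSpace ℝ (Fin N) → ℝ}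
    {x : EuclideanSpace ℝ (Fin N)} (hf : ContDiffAt ℝ 2 f x) (hg : ContDiffAt ℝ 2 g x) (s : ℝ) :
    laplacian (f + s • g) x = laplacian f x + s * laplacian g x := by
  have hsg : ContDiffAt ℝ 2 (s • g) x := hg.const_smul s
  have hfsg : ContDiffAt ℝ 2 (f + s • g) x := hf.add hsg
  rw [laplacian_eq_laplacian hfsg, laplacian_eq_laplacian hf,
    laplacian_eq_laplacian hg, hf.laplacian_add hsg,
    InnerProductSpace.laplacian_smul s hg, smul_eq_mul]

theorem ContDiffOn.continuousOn_laplacian {N : ℕ} {U : Set (EuclideanSpace ℝ (Fin N))}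
    (hU : IsOpen U) {f : EuclideanSpace ℝ (Fin N) → ℝ} (hf : ContDiffOn ℝ 2 f U) :
    ContinuousOn (laplacian f) U := by
  refine continuousOn_finsetSum _ fun i _ => ?_
  have hpartial : ContDiffOn ℝ 1 (fun y => fderiv ℝ f y (EuclideanSpace.single i 1)) U :=
    (hf.fderiv_of_isOpen hU le_rfl).clm_apply contDiffOn_const
  exact (hpartial.continuousOn_fderiv_of_isOpen hU le_rfl).clm_apply continuousOn_const

theorem ContinuousOn.nonneg_of_ae_nonneg {X : Type*} [TopologicalSpace X] [MeasurableSpace X]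
    {μ : Measure X} [μ.IsOpenPosMeasure] {U : Set X} (hU : IsOpen U) {f : X → ℝ}
    (hf : ContinuousOn f U) (h : ∀ᵐ x ∂μ, x ∈ U → 0 ≤ f x) : ∀ x ∈ U, 0 ≤ f x := by
  by_contra! ⟨x, hxU, hx⟩
  obtain ⟨y, ⟨hyU, hyneg⟩, hy⟩ := (Measure.dense_of_ae h).inter_open_nonempty _
    (hf.isOpen_inter_preimage hU isOpen_Iio) ⟨x, hxU, hx⟩
  exact (hy hyU).not_gt hyneg

theorem laplacian_nonneg_of_pos {N : ℕ} {D : Set (EuclideanSpace ℝ (Fin N))} (hD : IsOpen D)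
    {c w : EuclideanSpace ℝ (Fin N) → ℝ} (hwc : ContinuousOn w D) (hw2 : ContDiffOn ℝ 2 w D)
    (hineq : ∀ x ∈ D, 0 ≤ laplacian w x + c x * w x) (hc : ∀ᵐ x, x ∈ D → c x ≤ 0) :
    ∀ x ∈ D, 0 < w x → 0 ≤ laplacian w x := by
  have hV : IsOpen (D ∩ w ⁻¹' Set.Ioi 0) := hwc.isOpen_inter_preimage hD isOpen_Ioi
  refine fun x hx hwx => ContinuousOn.nonneg_of_ae_nonneg (μ := volume) hV
    ((hw2.continuousOn_laplacian hD).mono Set.inter_subset_left) ?_ x ⟨hx, hwx⟩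
  filter_upwards [hc] with y hy hyV
  linarith [hineq y hyV.1, mul_nonpos_of_nonpos_of_nonneg (hy hyV.1) (le_of_lt hyV.2)]

theorem le_of_laplacian_pos {N : ℕ} {U : Set (EuclideanSpace ℝ (Fin N))} (hU : IsOpen U)
    (hUb : Bornology.IsBounded U) {v : EuclideanSpace ℝ (Fin N) → ℝ}
    (hvc : ContinuousOn v (closure U)) (hv2 : ∀ x ∈ U, ContDiffAt ℝ 2 v x)
    (hΔ : ∀ x ∈ U, 0 < laplacian v x) {K : ℝ} (hK : ∀ x ∈ frontier U, v x ≤ K) :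
    ∀ x ∈ U, v x ≤ K := by
  intro x hx
  obtain ⟨y, hy, hmax⟩ := hUb.isCompact_closure.exists_isMaxOn ⟨x, subset_closure hx⟩ hvc
  refine (hmax (subset_closure hx)).trans ?_
  by_cases hyU : y ∈ U
  · have hloc : IsLocalMax v y :=
      hmax.isLocalMax (mem_of_superset (hU.mem_nhds hyU) subset_closure)
    exact absurd (laplacian_nonpos_of_isLocalMax (hv2 y hyU) hloc) (hΔ y hyU).not_ge
  · exact hK y (by rw [hU.frontier_eq]; exact ⟨hy, hyU⟩)

theorem mul_zpow_neg_sq_eq_div_pow (ρ d : ℝ) (N : ℕ) :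
    (ρ ^ 2) ^ N * (d ^ 2) ^ (-(N : ℤ)) = (ρ / d) ^ (2 * N) := by
  rw [zpow_neg, zpow_natCast, ← div_eq_mul_inv, ← div_pow, ← div_pow, pow_mul]

section Radial

variable {N : ℕ} {z : EuclideanSpace ℝ (Fin N)}

theorem hasFDerivAt_zpow_norm_sub_sq (m : ℤ) {y : EuclideanSpace ℝ (Fin N)} (hy : y ≠ z) :
    HasFDerivAt (fun y => (‖y - z‖ ^ 2) ^ m)
      ((2 * m * (‖y - z‖ ^ 2) ^ (m - 1)) • innerSL ℝ (y - z)) y := by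
  have hsq : HasFDerivAt (fun y => ‖y - z‖ ^ 2) (2 • innerSL ℝ (y - z)) y := by
    simpa using ((hasFDerivAt_id y).sub_const z).norm_sq
  have hpos : ‖y - z‖ ^ 2 ≠ 0 := by simpa [sub_eq_zero] using hy
  refine ((hasDerivAt_zpow m _ (Or.inl hpos)).comp_hasFDerivAt y hsq).congr_fderiv ?_
  ext v
  simp
  ring

theorem laplacian_zpow_norm_sub_sq (m : ℤ) {x : EuclideanSpace ℝ (Fin N)} (hx : x ≠ z) :
    laplacian (fun y => (‖y - z‖ ^ 2) ^ m) x
      = 2 * m * (N + 2 * m - 2) * (‖x - z‖ ^ 2) ^ (m - 1) := by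
  set h : ℝ := ‖x - z‖ ^ 2
  have hh : h ≠ 0 := by simpa [h, sub_eq_zero] using hx
  have hpartial (i : Fin N) : fderiv ℝ (fun y => fderiv ℝ (fun y => (‖y - z‖ ^ 2) ^ m) y
      (EuclideanSpace.single i 1)) x (EuclideanSpace.single i 1)
      = 4 * m * (m - 1) * h ^ (m - 2) * (x i - z i) ^ 2 + 2 * m * h ^ (m - 1) := by
    have hfirst : (fun y => fderiv ℝ (fun y => (‖y - z‖ ^ 2) ^ m) y (EuclideanSpace.single i 1))
        =ᶠ[𝓝 x] fun y => 2 * m * (‖y - z‖ ^ 2) ^ (m - 1) * (y i - z i) := by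
      filter_upwards [isOpen_ne.mem_nhds hx] with y hy
      simp [(hasFDerivAt_zpow_norm_sub_sq m hy).fderiv, EuclideanSpace.inner_single_right]
    have hcoord : HasFDerivAt (fun y : EuclideanSpace ℝ (Fin N) => y i - z i)
        (EuclideanSpace.proj (𝕜 := ℝ) i) x :=
      (EuclideanSpace.proj (𝕜 := ℝ) i).hasFDerivAt.sub_const (z i)
    rw [hfirst.fderiv_eq,
      (((hasFDerivAt_zpow_norm_sub_sq (m - 1) hx).const_mul (2 * m)).fun_mul hcoord).fderiv]
    simp [EuclideanSpace.inner_single_right, show m - 1 - 1 = m - 2 by ring]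
    ring
  have hsum : ∑ i, (x i - z i) ^ 2 = h := by
    simp [h, EuclideanSpace.real_norm_sq_eq]
  have hpow : h ^ (m - 2) * h = h ^ (m - 1) := by
    rw [← zpow_add_one₀ hh]; ring_nf
  simp only [laplacian, hpartial, Finset.sum_add_distrib, ← Finset.mul_sum, hsum,
    Finset.sum_const, Finset.card_univ, Fintype.card_fin, nsmul_eq_mul]
  rw [mul_assoc _ (h ^ (m - 2)), hpow]
  ring

theorem contDiffAt_zpow_neg_norm_sub_sq {x : EuclideanSpace ℝ (Fin N)} (n : ℕ) (hx : x ≠ z) :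
    ContDiffAt ℝ 2 (fun y => (‖y - z‖ ^ 2) ^ (-(n : ℤ))) x := by
  have hsq : ContDiff ℝ 2 fun y : EuclideanSpace ℝ (Fin N) => ‖y - z‖ ^ 2 :=
    contDiff_norm_sq ℝ |>.comp (contDiff_id.sub contDiff_const)
  simp only [zpow_neg, zpow_natCast]
  exact (hsq.pow n).contDiffAt.inv (pow_ne_zero _ (by simpa [sub_eq_zero] using hx))

theorem laplacian_zpow_neg_norm_sub_sq_pos (hN : N ≠ 0) {x : EuclideanSpace ℝ (Fin N)}
    (hx : x ≠ z) :
    0 < laplacian (fun y => (‖y - z‖ ^ 2) ^ (-(N : ℤ))) x := by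
  rw [laplacian_zpow_norm_sub_sq _ hx]
  have hpow : 0 < (‖x - z‖ ^ 2) ^ (-(N : ℤ) - 1) :=
    zpow_pos (by positivity [sub_ne_zero.2 hx]) _
  have hcoef : 2 * (-N : ℝ) * (N + 2 * -N - 2) = 2 * N * (N + 2) := by ring
  push_cast
  rw [hcoef]
  positivity

theorem laplacian_add_smul_barrier_pos (hN : N ≠ 0) {w : EuclideanSpace ℝ (Fin N) → ℝ}
    {y : EuclideanSpace ℝ (Fin N)} (hw : ContDiffAt ℝ 2 w y) (hΔw : 0 ≤ laplacian w y)
    (hy : y ≠ z) {s : ℝ} (hs : 0 < s) :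
    0 < laplacian (w + s • fun y => (‖y - z‖ ^ 2) ^ (-(N : ℤ))) y := by
  rw [laplacian_add_smul hw (contDiffAt_zpow_neg_norm_sub_sq N hy)]
  have := laplacian_zpow_neg_norm_sub_sq_pos hN hy
  positivity

end Radial

theorem le_zero_or_norm_eq_of_mem_frontier {N : ℕ} {D : Set (EuclideanSpace ℝ (Fin N))}
    (hD : IsOpen D) {w : EuclideanSpace ℝ (Fin N) → ℝ} (hwc : ContinuousOn w D)
    (hbd : ∀ y ∈ frontier D, w y ≤ 0) {z y : EuclideanSpace ℝ (Fin N)} {R : ℝ}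
    (hy : y ∈ frontier (D ∩ w ⁻¹' Set.Ioi 0 ∩ ball z R)) :
    w y ≤ 0 ∨ y ∈ D ∧ ‖y - z‖ = R := by
  rw [(hwc.isOpen_inter_preimage hD isOpen_Ioi |>.inter isOpen_ball).frontier_eq] at hy
  obtain ⟨hycl, hyU⟩ := hy
  have hyR : ‖y - z‖ ≤ R := by
    simpa [dist_eq_norm] using
      ((closure_mono Set.inter_subset_right).trans closure_ball_subset_closedBall) hycl
  by_cases hyD : y ∈ D
  · rcases hyR.lt_or_eq with hlt | heq
    · exact .inl (not_lt.1 fun hpos => hyU ⟨⟨hyD, hpos⟩, by simpa [dist_eq_norm] using hlt⟩)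
    · exact .inr ⟨hyD, heq⟩
  · refine .inl (hbd y ?_)
    rw [hD.frontier_eq]
    exact ⟨closure_mono (Set.inter_subset_left.trans Set.inter_subset_left) hycl, hyD⟩

theorem add_barrier_le {N : ℕ} (hN : N ≠ 0) {D : Set (EuclideanSpace ℝ (Fin N))}
    (hD : IsOpen D) {w : EuclideanSpace ℝ (Fin N) → ℝ} (hwc : ContinuousOn w (closure D))
    (hw2 : ContDiffOn ℝ 2 w D) (hΔ : ∀ y ∈ D, 0 < w y → 0 ≤ laplacian w y)
    (hbd : ∀ y ∈ frontier D, w y ≤ 0) {M : ℝ} (hM : ∀ y ∈ D, w y ≤ M)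
    {z : EuclideanSpace ℝ (Fin N)} {ρ R K : ℝ} (hρ : 0 < ρ) (hfar : ∀ y ∈ closure D, ρ ≤ ‖y - z‖)
    (hK : 0 < K) (hMK : M + K * (ρ / R) ^ (2 * N) ≤ K) :
    ∀ y ∈ D ∩ w ⁻¹' Set.Ioi 0 ∩ ball z R, w y + K * (ρ / ‖y - z‖) ^ (2 * N) ≤ K := by
  set U := D ∩ w ⁻¹' Set.Ioi 0 ∩ ball z R
  have hUD : U ⊆ D := fun y hy => hy.1.1
  have hz (y) (hy : y ∈ closure D) : y ≠ z := by
    rintro rfl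
    have := hfar y hy
    simp only [sub_self, norm_zero] at this
    linarith
  set φ : EuclideanSpace ℝ (Fin N) → ℝ := fun y => (‖y - z‖ ^ 2) ^ (-(N : ℤ))
  have hφ (y) (hy : y ∈ closure D) : ContDiffAt ℝ 2 φ y :=
    contDiffAt_zpow_neg_norm_sub_sq N (hz y hy)
  set s := K * (ρ ^ 2) ^ N
  have hsφ (y) : w y + s • φ y = w y + K * (ρ / ‖y - z‖) ^ (2 * N) := by
    simp only [smul_eq_mul, φ, s, mul_assoc, mul_zpow_neg_sq_eq_div_pow]
  have hUopen : IsOpen U :=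
    ((hwc.mono subset_closure).isOpen_inter_preimage hD isOpen_Ioi).inter isOpen_ball
  intro y hy
  rw [← hsφ]
  refine le_of_laplacian_pos (v := w + s • φ) hUopen
    (isBounded_ball.subset Set.inter_subset_right) ?_
    (fun y hy => (hw2.contDiffAt (hD.mem_nhds (hUD hy))).add
      ((hφ y (subset_closure (hUD hy))).const_smul s))
    (fun y hy => laplacian_add_smul_barrier_pos hN (hw2.contDiffAt (hD.mem_nhds (hUD hy)))
      (hΔ y (hUD hy) hy.1.2) (hz y (subset_closure (hUD hy))) (by positivity))
    (fun y hy => ?_) y hy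
  · exact (hwc.mono (closure_mono hUD)).add (ContinuousOn.const_smul (fun y hy =>
      (hφ y (closure_mono hUD hy)).continuousAt.continuousWithinAt) s)
  · have hyD : y ∈ closure D := closure_mono hUD (frontier_subset_closure hy)
    have hratio : (ρ / ‖y - z‖) ^ (2 * N) ≤ 1 :=
      pow_le_one₀ (by positivity) ((div_le_one ((hρ.trans_le (hfar y hyD)))).2 (hfar y hyD))
    change w y + s • φ y ≤ K
    rw [hsφ]
    rcases le_zero_or_norm_eq_of_mem_frontier hD (hwc.mono subset_closure) hbd hy with
      hwy | ⟨hyD, hyR⟩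
    · linarith [mul_le_of_le_one_right hK.le hratio]
    · rw [hyR]
      linarith [hM y hyD]

theorem le_mul_of_exterior_ball {N : ℕ} (hN : N ≠ 0) {D : Set (EuclideanSpace ℝ (Fin N))}
    (hD : IsOpen D) {w : EuclideanSpace ℝ (Fin N) → ℝ} (hwc : ContinuousOn w (closure D))
    (hw2 : ContDiffOn ℝ 2 w D) (hΔ : ∀ y ∈ D, 0 < w y → 0 ≤ laplacian w y)
    (hbd : ∀ y ∈ frontier D, w y ≤ 0) {M : ℝ} (hM0 : 0 ≤ M) (hM : ∀ y ∈ D, w y ≤ M)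
    {z x : EuclideanSpace ℝ (Fin N)} {ρ r R : ℝ} (hρ : 0 < ρ)
    (hfar : ∀ y ∈ closure D, ρ ≤ ‖y - z‖) (hx : x ∈ D) (hxr : ‖x - z‖ ≤ r) (hrR : r < R) :
    w x ≤ (1 - (ρ / r) ^ (2 * N)) / (1 - (ρ / R) ^ (2 * N)) * M := by
  have hρx : ρ ≤ ‖x - z‖ := hfar x (subset_closure hx)
  have hρr : (ρ / r) ^ (2 * N) ≤ 1 :=
    pow_le_one₀ (div_nonneg hρ.le (by linarith)) ((div_le_one (by linarith)).2 (by linarith))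
  have hρR : (ρ / R) ^ (2 * N) < 1 :=
    pow_lt_one₀ (div_nonneg hρ.le (by linarith)) ((div_lt_one (by linarith)).2 (by linarith))
      (by omega)
  rcases le_or_gt (w x) 0 with hwx | hwx
  · exact hwx.trans (mul_nonneg (div_nonneg (sub_nonneg.2 hρr) (sub_pos.2 hρR).le) hM0)
  set K := M / (1 - (ρ / R) ^ (2 * N))
  have hKM : M + K * (ρ / R) ^ (2 * N) = K := by
    rw [← div_mul_cancel₀ M (sub_pos.2 hρR).ne']; ring
  have hK : 0 < K := div_pos (hwx.trans_le (hM x hx)) (sub_pos.2 hρR)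
  have hbarrier := add_barrier_le hN hD hwc hw2 hΔ hbd hM hρ hfar hK hKM.le x
    ⟨⟨hx, hwx⟩, by simpa [dist_eq_norm] using hxr.trans_lt hrR⟩
  have hxρ : (ρ / r) ^ (2 * N) ≤ (ρ / ‖x - z‖) ^ (2 * N) :=
    pow_le_pow_left₀ (div_nonneg hρ.le (by linarith))
      (div_le_div_of_nonneg_left hρ.le (hρ.trans_le hρx) hxr) _
  have hκ : (1 - (ρ / r) ^ (2 * N)) / (1 - (ρ / R) ^ (2 * N)) * M
      = K * (1 - (ρ / r) ^ (2 * N)) := by ring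
  linarith [mul_le_mul_of_nonneg_left hxρ hK.le]

section Cone

variable {E : Type*} [NormedAddCommGroup E] [NormedSpace ℝ E] {C : Set E} {z : E}

theorem mem_closure_of_forall_homothety_mem (hCne : C.Nonempty)
    (hC : ∀ x ∈ C, ∀ t : ℝ, 0 < t → z + t • (x - z) ∈ C) : z ∈ closure C := by
  obtain ⟨p, hp⟩ := hCne
  have hlim : Tendsto (fun t : ℝ => z + t • (p - z)) (𝓝[>] 0) (𝓝 z) := by
    have : Continuous fun t : ℝ => z + t • (p - z) := by fun_prop
    simpa using (this.tendsto 0).mono_left nhdsWithin_le_nhds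
  exact mem_closure_of_tendsto hlim (eventually_nhdsWithin_of_forall fun t ht => hC p hp t ht)

theorem ball_homothety_subset (hC : ∀ x ∈ C, ∀ t : ℝ, 0 < t → z + t • (x - z) ∈ C) {p : E}
    {r : ℝ} (hball : ball p r ⊆ C) {t : ℝ} (ht : 0 < t) :
    ball (z + t • (p - z)) (t * r) ⊆ C := by
  intro y hy
  have hu : z + t⁻¹ • (y - z) ∈ ball p r := by
    rw [mem_ball_iff_norm] at hy ⊢
    have : z + t⁻¹ • (y - z) - p = t⁻¹ • (y - (z + t • (p - z))) := by
      simp only [smul_sub, smul_add, smul_smul, inv_mul_cancel₀ ht.ne', one_smul]; abel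
    rw [this, norm_smul, Real.norm_of_nonneg (inv_nonneg.2 ht.le), inv_mul_lt_iff₀ ht]
    exact hy
  simpa [smul_smul, mul_inv_cancel₀ ht.ne'] using hC _ (hball hu) t ht

theorem exists_ball_subset_of_isOpen_cone [Nontrivial E] (hCo : IsOpen C) (hCne : C.Nonempty)
    (hC : ∀ x ∈ C, ∀ t : ℝ, 0 < t → z + t • (x - z) ∈ C) :
    ∃ q, 0 < q ∧ q ≤ 1 ∧ ∀ x : E, ∃ z', ‖x - z'‖ ≤ 2 * ‖x - z‖ ∧ ball z' (q * ‖x - z‖) ⊆ C := by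
  obtain ⟨p, hpC, hpz⟩ : ∃ p ∈ C, p ≠ z := by
    obtain ⟨p, hp⟩ := hCne
    by_cases hpz : p = z
    · subst hpz
      obtain ⟨y, hyC, hyz⟩ := Filter.nonempty_of_mem
        (inter_mem (mem_nhdsWithin_of_mem_nhds (hCo.mem_nhds hp)) (self_mem_nhdsWithin (s := {p}ᶜ)))
      exact ⟨y, hyC, hyz⟩
    · exact ⟨p, hp, hpz⟩
  obtain ⟨r₀, hr₀, hball₀⟩ := Metric.isOpen_iff.1 hCo p hpC
  set P := ‖p - z‖
  have hP : 0 < P := norm_pos_iff.2 (sub_ne_zero.2 hpz)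
  set r := min r₀ P
  refine ⟨r / P, by positivity, div_le_one_of_le₀ (min_le_right _ _) hP.le, fun x => ?_⟩
  set t := ‖x - z‖ / P
  have hzt : ‖z + t • (p - z) - z‖ = ‖x - z‖ := by
    rw [add_sub_cancel_left, norm_smul, Real.norm_of_nonneg (by positivity),
      div_mul_cancel₀ _ hP.ne']
  refine ⟨z + t • (p - z), ?_, ?_⟩
  · calc ‖x - (z + t • (p - z))‖ ≤ ‖x - z‖ + ‖z - (z + t • (p - z))‖ :=
          norm_sub_le_norm_sub_add_norm_sub _ _ _
      _ = 2 * ‖x - z‖ := by rw [norm_sub_rev z, hzt]; ring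
  · rcases (norm_nonneg (x - z)).lt_or_eq with hx | hx
    · have := ball_homothety_subset hC ((ball_subset_ball (min_le_left r₀ P)).trans hball₀)
        (div_pos hx hP)
      rwa [div_mul_comm] at this
    · simp [← hx]

end Cone

theorem nonpos_of_forall_le_mul {α : Type*} {S : Set α} {f : α → ℝ} {κ : ℝ} (hκ : κ < 1)
    (hbdd : BddAbove (f '' S)) (h : ∀ M, 0 ≤ M → (∀ y ∈ S, f y ≤ M) → ∀ x ∈ S, f x ≤ κ * M) :
    ∀ x ∈ S, f x ≤ 0 := by
  by_contra! ⟨x, hx, hfx⟩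
  set M := sSup (f '' S)
  have hfM : ∀ y ∈ S, f y ≤ M := fun y hy => le_csSup hbdd (Set.mem_image_of_mem f hy)
  have hM : 0 < M := hfx.trans_le (hfM x hx)
  have hMκ : M ≤ κ * M :=
    csSup_le (Set.image_nonempty.2 ⟨x, hx⟩) (Set.forall_mem_image.2 (h M hM.le hfM))
  exact (mul_lt_of_lt_one_left hM hκ).not_ge hMκ

theorem stmt_8_general (N : ℕ) (hN : 2 ≤ N)
    (D : Set (EuclideanSpace ℝ (Fin N))) (hDopen : IsOpen D)
    (hcone : ∃ (z : EuclideanSpace ℝ (Fin N)) (Cone : Set (EuclideanSpace ℝ (Fin N))),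
      IsOpen Cone ∧ IsConnected Cone ∧ Cone.Nonempty ∧
      (∀ x ∈ Cone, ∀ t : ℝ, 0 < t → z + t • (x - z) ∈ Cone) ∧
      Disjoint (closure D) (closure Cone))
    (c : EuclideanSpace ℝ (Fin N) → ℝ)
    (hcneg : ∀ᵐ x ∂(volume : Measure (EuclideanSpace ℝ (Fin N))), x ∈ D → c x ≤ 0)
    (w : EuclideanSpace ℝ (Fin N) → ℝ)
    (hwcont : ContinuousOn w (closure D))
    (hwreg : ContDiffOn ℝ 2 w D)
    (hineq : ∀ x ∈ D, 0 ≤ laplacian w x + c x * w x)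
    (hbd : ∀ x ∈ frontier D, w x ≤ 0)
    (hbdd : ∃ b : ℝ, ∀ x ∈ D, w x ≤ b) :
    ∀ x ∈ D, w x ≤ 0 := by
  obtain ⟨z, Cone, hCopen, -, hCne, hChom, hdisj⟩ := hcone
  have hN0 : N ≠ 0 := by omega
  have : Nonempty (Fin N) := ⟨⟨0, by omega⟩⟩
  obtain ⟨q, hq, hq1, hball⟩ := exists_ball_subset_of_isOpen_cone hCopen hCne hChom
  have hzC : z ∈ closure Cone := mem_closure_of_forall_homothety_mem hCne hChom
  have hΔ := laplacian_nonneg_of_pos hDopen (hwcont.mono subset_closure) hwreg hineq hcneg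
  obtain ⟨b, hb⟩ := hbdd
  refine nonpos_of_forall_le_mul (κ := (1 - (q / 2) ^ (2 * N)) / (1 - (q / 4) ^ (2 * N)))
    ?_ ⟨b, Set.forall_mem_image.2 hb⟩ fun M hM0 hM x hx => ?_
  · have h4 : (q / 4) ^ (2 * N) < 1 := pow_lt_one₀ (by positivity) (by linarith) (by omega)
    refine (div_lt_one (sub_pos.2 h4)).2 (sub_lt_sub_left ?_ 1)
    exact pow_lt_pow_left₀ (by linarith) (by positivity) (by omega)
  obtain ⟨z', hxz', hz'Cone⟩ := hball x
  have ha : 0 < ‖x - z‖ := norm_pos_iff.2 <| sub_ne_zero.2 fun hxz =>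
    hdisj.ne_of_mem (subset_closure hx) hzC hxz
  have hfar : ∀ y ∈ closure D, q * ‖x - z‖ ≤ ‖y - z'‖ := fun y hy => not_lt.1 fun hlt =>
    hdisj.ne_of_mem hy (subset_closure (hz'Cone (mem_ball_iff_norm.2 hlt))) rfl
  have := le_mul_of_exterior_ball hN0 hDopen hwcont hwreg hΔ hbd hM0 hM (by positivity) hfar hx
    hxz' (by linarith : 2 * ‖x - z‖ < 4 * ‖x - z‖)
  rwa [mul_div_mul_right _ _ ha.ne', mul_div_mul_right _ _ ha.ne'] at this

/-- Berestycki–Caffarelli–Nirenberg maximum principle in unbounded domains: if the open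
connected set `D` has closure disjoint from the closure of an infinite open connected cone,
`c ≤ 0` a.e. in `D` is locally bounded, and `w` is bounded above, satisfies
`Δw + c·w ≥ 0` in `D` and `w ≤ 0` on `∂D`, then `w ≤ 0` in `D`. -/
theorem stmt_8 (N : ℕ) (hN : 2 ≤ N)
    (D : Set (EuclideanSpace ℝ (Fin N))) (hDopen : IsOpen D) (hDconn : IsConnected D)
    (hcone : ∃ (z : EuclideanSpace ℝ (Fin N)) (Cone : Set (EuclideanSpace ℝ (Fin N))),
      IsOpen Cone ∧ IsConnected Cone ∧ Cone.Nonempty ∧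
      (∀ x ∈ Cone, ∀ t : ℝ, 0 < t → z + t • (x - z) ∈ Cone) ∧
      Disjoint (closure D) (closure Cone))
    (c : EuclideanSpace ℝ (Fin N) → ℝ)
    (hcloc : ∀ x ∈ D, ∃ (s : Set (EuclideanSpace ℝ (Fin N))) (B : ℝ),
      s ∈ nhds x ∧ ∀ᵐ y ∂(volume : Measure (EuclideanSpace ℝ (Fin N))),
        y ∈ s ∩ D → |c y| ≤ B)
    (hcneg : ∀ᵐ x ∂(volume : Measure (EuclideanSpace ℝ (Fin N))), x ∈ D → c x ≤ 0)
    (w : EuclideanSpace ℝ (Fin N) → ℝ)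
    (hwcont : ContinuousOn w (closure D))
    (hwreg : ContDiffOn ℝ 2 w D)
    (hineq : ∀ x ∈ D, 0 ≤ laplacian w x + c x * w x)
    (hbd : ∀ x ∈ frontier D, w x ≤ 0)
    (hbdd : ∃ b : ℝ, ∀ x ∈ D, w x ≤ b) :
    ∀ x ∈ D, w x ≤ 0 :=
  stmt_8_general N hN D hDopen hcone c hcneg w hwcont hwreg hineq hbd hbdd
end
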